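/- arXiv:2009.11738 — 2 statements merged into one kernel-verified Lean document; each statement's English description precedes it below -/
import Mathlib

section
/- Every subgroup of a unitarizable countable group is unitarizable. -/
noncomputable section

open scoped ENNReal
open MeasureTheory

/-! ## Amenability via invariant means -/

/-- A left-invariant mean on the bounded (continuous) real-valued functions on a
(discrete) group `G`: a positive normalized linear functional invariant under left
translations. -/
structure InvariantMean (G : Type*) [Group G] [TopologicalSpace G] [DiscreteTopology G] where
  lin : (BoundedContinuousFunction G ℝ) →ₗ[ℝ] ℝ
  nonneg : ∀ f : BoundedContinuousFunction G ℝ, (∀ x, 0 ≤ f x) → 0 ≤ lin f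
  normalized : lin 1 = 1
  invariant : ∀ (g : G) (f : BoundedContinuousFunction G ℝ),
    lin (f.compContinuous ⟨fun x => g * x, continuous_of_discreteTopology⟩) = lin f

/-- A group is amenable if there is a left-invariant mean on its bounded functions. -/
def IsAmenable (G : Type*) [Group G] : Prop :=
  letI : TopologicalSpace G := ⊥
  letI : DiscreteTopology G := ⟨rfl⟩
  Nonempty (InvariantMean G)

/-! ## Representations of groups on Hilbert spaces, unitarizability -/

section Reps

variable {G : Type*} [Group G] {H : Type*} [NormedAddCommGroup H] [InnerProductSpace ℂ H]

/-- A representation (homomorphism into bounded invertible operators) is uniformly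
bounded if the operator norms of its values are bounded. -/
def UniformlyBoundedRep (π : G →* (H →L[ℂ] H)ˣ) : Prop :=
  ∃ K : ℝ, ∀ g : G, ‖(π g : H →L[ℂ] H)‖ ≤ K

/-- A representation is unitarizable if some bounded invertible operator conjugates it
into a unitary representation. -/
def UnitarizableRep [CompleteSpace H] (π : G →* (H →L[ℂ] H)ˣ) : Prop :=
  ∃ S : (H →L[ℂ] H)ˣ, ∀ g : G,
    ((S * π g * S⁻¹ : (H →L[ℂ] H)ˣ) : H →L[ℂ] H) ∈ unitary (H →L[ℂ] H)

end Reps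

/-- A group is unitarizable if every uniformly bounded representation of it on a complex
Hilbert space is unitarizable. -/
def UnitarizableGroup (G : Type*) [Group G] : Prop :=
  ∀ (H : Type) (_ : NormedAddCommGroup H) (_ : InnerProductSpace ℂ H) (_ : CompleteSpace H)
    (π : G →* (H →L[ℂ] H)ˣ), UniformlyBoundedRep π → UnitarizableRep π

/-! ## Restricted wreath products -/

/-- The restricted direct product `⊕_G A`: functions `G → A` with finite support,
as a subgroup of the full product. -/
def restrictedProduct (G A : Type*) [Group A] : Subgroup (G → A) where
  carrier := {f | (Function.mulSupport f).Finite}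
  one_mem' := by
    show (Function.mulSupport (1 : G → A)).Finite
    simp [Function.mulSupport_one]
  mul_mem' := by
    intro f g hf hg
    exact ((hf.union hg).subset (Function.mulSupport_mul f g))
  inv_mem' := by
    intro f hf
    simpa [Function.mulSupport_inv] using hf

/-- The shift automorphism of `⊕_G A` induced by right translation by `g`. -/
def shiftAut {G A : Type*} [Group G] [Group A] (g : G) :
    restrictedProduct G A ≃* restrictedProduct G A where
  toFun f := ⟨fun x => (f : G → A) (x * g), by
    show ((fun x : G => x * g) ⁻¹' Function.mulSupport (f : G → A)).Finite
    exact f.2.preimage ((mul_left_injective g).injOn)⟩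
  invFun f := ⟨fun x => (f : G → A) (x * g⁻¹), by
    show ((fun x : G => x * g⁻¹) ⁻¹' Function.mulSupport (f : G → A)).Finite
    exact f.2.preimage ((mul_left_injective g⁻¹).injOn)⟩
  left_inv f := by
    ext x; simp
  right_inv f := by
    ext x; simp
  map_mul' f₁ f₂ := rfl

/-- The shift action of `G` on `⊕_G A` as a homomorphism into the automorphism group. -/
def shiftHom (A G : Type*) [Group A] [Group G] : G →* MulAut (restrictedProduct G A) where
  toFun := shiftAut
  map_one' := by
    refine MulEquiv.ext fun f => Subtype.ext (funext fun x => ?_)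
    simp [shiftAut]
  map_mul' g h := by
    refine MulEquiv.ext fun f => Subtype.ext (funext fun x => ?_)
    simp [shiftAut, mul_assoc]

/-- The restricted wreath product `A ≀ G = (⊕_G A) ⋊ G`. -/
abbrev WreathProduct (A G : Type*) [Group A] [Group G] :=
  SemidirectProduct (restrictedProduct G A) G (shiftHom A G)

end
noncomputable section

/-! ## Quasi-representations, Ulam stability, strong rigidity (group level) -/

section UlamGroup

variable {G : Type*} [Group G] {H : Type*} [NormedAddCommGroup H] [InnerProductSpace ℂ H]
  [CompleteSpace H]

/-- A unitary `δ`-representation of a group: a unital map into the unitary operators whose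
multiplicativity defect is `< δ` in operator norm. -/
def IsUnitaryQuasiRep (δ : ℝ) (ρ : G → (H →L[ℂ] H)) : Prop :=
  ρ 1 = 1 ∧ (∀ g : G, ρ g ∈ unitary (H →L[ℂ] H)) ∧
    ∀ g h : G, ‖ρ g * ρ h - ρ (g * h)‖ < δ

/-- A unitary representation `ρ` is strongly rigid if every unitary representation uniformly
close to it is conjugate to it by a unitary close to the identity. -/
def IsStronglyRigid (ρ : G →* unitary (H →L[ℂ] H)) : Prop :=
  ∀ ε > (0 : ℝ), ∃ δ > (0 : ℝ), ∀ ρ₁ : G →* unitary (H →L[ℂ] H),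
    (∀ g : G, ‖(ρ g : H →L[ℂ] H) - (ρ₁ g : H →L[ℂ] H)‖ < δ) →
      ∃ U : unitary (H →L[ℂ] H),
        (∀ g : G, (ρ₁ g : H →L[ℂ] H) =
          (U : H →L[ℂ] H) * (ρ g : H →L[ℂ] H) * ((U⁻¹ : unitary (H →L[ℂ] H)) : H →L[ℂ] H)) ∧
        ‖(U : H →L[ℂ] H) - 1‖ < ε

end UlamGroup

/-- A group is strongly Ulam stable if unitary quasi-representations with small defect are
uniformly close to genuine unitary representations, on every complex Hilbert space. -/
def StronglyUlamStable (G : Type*) [Group G] : Prop :=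
  ∀ ε > (0 : ℝ), ∃ δ > (0 : ℝ), ∀ (H : Type) (_ : NormedAddCommGroup H)
    (_ : InnerProductSpace ℂ H) (_ : CompleteSpace H) (ρ : G → (H →L[ℂ] H)),
    IsUnitaryQuasiRep δ ρ →
      ∃ ρ₁ : G →* unitary (H →L[ℂ] H), ∀ g : G, ‖ρ g - (ρ₁ g : H →L[ℂ] H)‖ < ε

/-- A bundled unitary representation of `G` on some complex Hilbert space. -/
structure UnitaryRep (G : Type*) [Group G] where
  carrier : Type
  [normed : NormedAddCommGroup carrier]
  [ips : InnerProductSpace ℂ carrier]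
  [complete : CompleteSpace carrier]
  hom : G →* unitary (carrier →L[ℂ] carrier)

attribute [instance] UnitaryRep.normed UnitaryRep.ips UnitaryRep.complete

/-- `G` has a unitary representation that is not strongly rigid. -/
def HasNonStronglyRigidRep (G : Type*) [Group G] : Prop :=
  ∃ r : UnitaryRep G, ¬ IsStronglyRigid r.hom

/-- The data witnessing extensional strong Ulam stability for a quasi-representation `ρ` of `G`
on `K` at precision `ε`: a Hilbert space `carrier` containing `K` (via the isometric embedding
`embed`), a unitary quasi-representation `ρ'` on `carrier` extending `ρ`, and a genuine unitary
representation `ρ₁` on `carrier` uniformly `ε`-close to `ρ'`. -/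
structure UlamExtension (G : Type*) [Group G] (K : Type*) [NormedAddCommGroup K]
    [InnerProductSpace ℂ K] [CompleteSpace K] (ρ : G → (K →L[ℂ] K)) (ε : ℝ) where
  carrier : Type
  [normed : NormedAddCommGroup carrier]
  [ips : InnerProductSpace ℂ carrier]
  [complete : CompleteSpace carrier]
  embed : K →ₗᵢ[ℂ] carrier
  ρ' : G → (carrier →L[ℂ] carrier)
  ρ'_one : ρ' 1 = 1
  ρ'_unitary : ∀ g : G, ρ' g ∈ unitary (carrier →L[ℂ] carrier)
  ρ'_extends : ∀ (g : G) (v : K), ρ' g (embed v) = embed (ρ g v)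
  ρ₁ : G →* unitary (carrier →L[ℂ] carrier)
  close : ∀ g : G, ‖ρ' g - (ρ₁ g : carrier →L[ℂ] carrier)‖ < ε

attribute [instance] UlamExtension.normed UlamExtension.ips UlamExtension.complete

/-- A group is extensionally strongly Ulam stable if every unitary quasi-representation with
small enough defect extends, on a larger Hilbert space, to a unitary quasi-representation that
is uniformly close to a genuine unitary representation. -/
def ExtensionallyStronglyUlamStable (G : Type*) [Group G] : Prop :=
  ∀ ε > (0 : ℝ), ∃ δ > (0 : ℝ), ∀ (K : Type) (_ : NormedAddCommGroup K)
    (_ : InnerProductSpace ℂ K) (_ : CompleteSpace K) (ρ : G → (K →L[ℂ] K)),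
    IsUnitaryQuasiRep δ ρ → Nonempty (UlamExtension G K ρ ε)

end
noncomputable section

namespace LampStability

/-! ## Countable measure-preserving equivalence relations -/

/-- A countable Borel measure-preserving equivalence relation on a measure space `(X, μ)`:
a Borel equivalence relation with (at most) countable classes such that every Borel partial
injection whose graph is contained in the relation preserves `μ`. -/
structure CountableMPRel (X : Type*) [MeasurableSpace X] (μ : MeasureTheory.Measure X) where
  rel : X → X → Prop
  equivalence : Equivalence rel
  measurableSet_rel : MeasurableSet {p : X × X | rel p.1 p.2}
  countable_classes : ∀ x : X, {y | rel x y}.Countable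
  measure_preserving : ∀ (s : Set X) (f : X → X), MeasurableSet s → Measurable f →
    Set.InjOn f s → (∀ x ∈ s, rel x (f x)) → μ (f '' s) = μ s

variable {X : Type*} [MeasurableSpace X] {μ : MeasureTheory.Measure X}

/-- Ergodicity: every invariant measurable set is null or conull. -/
def CountableMPRel.ErgodicRel (E : CountableMPRel X μ) : Prop :=
  ∀ s : Set X, MeasurableSet s → (∀ x ∈ s, ∀ y, E.rel x y → y ∈ s) →
    μ s = 0 ∨ μ sᶜ = 0

/-- `P` holds for almost every pair `(x, y) ∈ E`: it holds on all `E`-related pairs from a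
conull subset of `X`. -/
def CountableMPRel.aePairs (E : CountableMPRel X μ) (P : X → X → Prop) : Prop :=
  ∃ X' : Set X, μ X'ᶜ = 0 ∧ ∀ x ∈ X', ∀ y ∈ X', E.rel x y → P x y

/-- `P` holds for almost every composable triple of `E`. -/
def CountableMPRel.aeTriples (E : CountableMPRel X μ) (P : X → X → X → Prop) : Prop :=
  ∃ X' : Set X, μ X'ᶜ = 0 ∧ ∀ x ∈ X', ∀ y ∈ X', ∀ z ∈ X',
    E.rel x y → E.rel y z → P x y z

/-! ## Measure-preserving actions, essential freeness, orbital containment -/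

/-- A measure-preserving action of a group `N` on `(X, μ)` by measurable maps. -/
structure MPAction (N X : Type*) [Group N] [MeasurableSpace X] (μ : MeasureTheory.Measure X) where
  toFun : N → X → X
  measurable : ∀ n : N, Measurable (toFun n)
  one_apply : ∀ x : X, toFun 1 x = x
  mul_apply : ∀ (m n : N) (x : X), toFun (m * n) x = toFun m (toFun n x)
  measurePreserving : ∀ n : N, MeasureTheory.MeasurePreserving (toFun n) μ μ

/-- Essential freeness: every non-identity group element moves almost every point. -/
def MPAction.EssentiallyFree {N : Type*} [Group N] (a : MPAction N X μ) : Prop :=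
  ∀ n : N, n ≠ 1 → ∀ᵐ x ∂μ, a.toFun n x ≠ x

/-- Ergodicity of an action: every strictly invariant measurable set is null or conull. -/
def MPAction.ErgodicAct {N : Type*} [Group N] (a : MPAction N X μ) : Prop :=
  ∀ s : Set X, MeasurableSet s → (∀ n : N, a.toFun n ⁻¹' s = s) → μ s = 0 ∨ μ sᶜ = 0

/-- The orbits of the action `a` are almost everywhere contained in the classes of `E`. -/
def CountableMPRel.ContainsOrbits (E : CountableMPRel X μ) {N : Type*} [Group N]
    (a : MPAction N X μ) : Prop :=
  ∀ n : N, ∀ᵐ x ∂μ, E.rel x (a.toFun n x)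

/-- `E` orbitally contains the countable group `N`: there is an essentially free
measure-preserving action of `N` on `(X, μ)` whose orbits are a.e. contained in `E`-classes. -/
def CountableMPRel.OrbitallyContains (E : CountableMPRel X μ) (N : Type*) [Group N] : Prop :=
  ∃ a : MPAction N X μ, a.EssentiallyFree ∧ E.ContainsOrbits a

/-- Borel measurability of a map into a topological space, with respect to the Borel
σ-algebra on the codomain. -/
def BorelMeas {α β : Type*} [MeasurableSpace α] [TopologicalSpace β] (f : α → β) : Prop :=
  @Measurable α β _ (borel β) f

/-! ## Representations of equivalence relations -/

section RelReps

variable {H : Type*} [NormedAddCommGroup H] [InnerProductSpace ℂ H] [CompleteSpace H]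

/-- A quasi-representation of a countable measure-preserving equivalence relation `E` on a
Hilbert space `H`: a Borel essentially uniformly bounded field of invertible operators indexed
by pairs, equal to the identity on the diagonal. (No cocycle identity is imposed.) -/
structure RelQuasiRep (E : CountableMPRel X μ) (H : Type*) [NormedAddCommGroup H]
    [InnerProductSpace ℂ H] [CompleteSpace H] where
  η : X → X → (H →L[ℂ] H)ˣ
  measurable : ∀ v : H, BorelMeas fun p : X × X => ((η p.1 p.2 : H →L[ℂ] H) v)
  id_ae : ∀ᵐ x ∂μ, η x x = 1
  bounded : ∃ K : ℝ, E.aePairs fun x y => ‖(η x y : H →L[ℂ] H)‖ ≤ K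

/-- The defect of a quasi-representation is at most `δ`. -/
def RelQuasiRep.DefectLe {E : CountableMPRel X μ} (q : RelQuasiRep E H) (δ : ℝ) : Prop :=
  E.aeTriples fun x y z =>
    ‖((q.η y z * q.η x y : (H →L[ℂ] H)ˣ) : H →L[ℂ] H) - (q.η x z : H →L[ℂ] H)‖ ≤ δ

/-- The defect of a quasi-representation is smaller than `δ` (an `δ`-representation). -/
def RelQuasiRep.DefectLt {E : CountableMPRel X μ} (q : RelQuasiRep E H) (δ : ℝ) : Prop :=
  E.aeTriples fun x y z =>
    ‖((q.η y z * q.η x y : (H →L[ℂ] H)ˣ) : H →L[ℂ] H) - (q.η x z : H →L[ℂ] H)‖ < δ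

/-- The essential supremum of the operator norms of a quasi-representation is at most `c`. -/
def RelQuasiRep.NormLe {E : CountableMPRel X μ} (q : RelQuasiRep E H) (c : ℝ) : Prop :=
  E.aePairs fun x y => ‖(q.η x y : H →L[ℂ] H)‖ ≤ c

/-- A quasi-representation is unitary if almost all its operators are unitary. -/
def RelQuasiRep.IsUnitary {E : CountableMPRel X μ} (q : RelQuasiRep E H) : Prop :=
  E.aePairs fun x y => (q.η x y : H →L[ℂ] H) ∈ unitary (H →L[ℂ] H)

/-- A representation of `E`: a quasi-representation satisfying the cocycle identity on almost
every composable triple. -/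
structure RelRep (E : CountableMPRel X μ) (H : Type*) [NormedAddCommGroup H]
    [InnerProductSpace ℂ H] [CompleteSpace H] extends RelQuasiRep E H where
  cocycle : E.aeTriples fun x y z => η y z * η x y = η x z

/-- A representation of `E` is unitary if almost all its operators are unitary. -/
def RelRep.IsUnitary {E : CountableMPRel X μ} (r : RelRep E H) : Prop :=
  r.toRelQuasiRep.IsUnitary

/-- The (essential supremum) distance between two operator fields is `< c`. -/
def CountableMPRel.distLt (E : CountableMPRel X μ)
    (η₁ η₂ : X → X → (H →L[ℂ] H)ˣ) (c : ℝ) : Prop :=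
  E.aePairs fun x y => ‖(η₁ x y : H →L[ℂ] H) - (η₂ x y : H →L[ℂ] H)‖ < c

/-- The (essential supremum) distance between two operator fields is `≤ c`. -/
def CountableMPRel.distLe (E : CountableMPRel X μ)
    (η₁ η₂ : X → X → (H →L[ℂ] H)ˣ) (c : ℝ) : Prop :=
  E.aePairs fun x y => ‖(η₁ x y : H →L[ℂ] H) - (η₂ x y : H →L[ℂ] H)‖ ≤ c

/-- A measurable field of operators on `X`. -/
def MeasurableField (U : X → (H →L[ℂ] H)) : Prop :=
  ∀ v : H, BorelMeas fun x => U x v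

/-- `η₁` is conjugated to `η₂` by the measurable field `(U_x)`:
`η₁(x,y) U_x = U_y η₂(x,y)` for a.e. pair. -/
def CountableMPRel.ConjugatedBy (E : CountableMPRel X μ)
    (η₁ η₂ : X → X → (H →L[ℂ] H)ˣ) (U : X → (H →L[ℂ] H)) : Prop :=
  E.aePairs fun x y => (η₁ x y : H →L[ℂ] H) * U x = U y * (η₂ x y : H →L[ℂ] H)

/-- A unitary representation `r` of `E` is strongly rigid if every unitary representation
close to it is conjugated to it by a measurable field of unitaries uniformly close to the
identity almost everywhere. -/
def RelRep.IsStronglyRigid {E : CountableMPRel X μ} (r : RelRep E H) : Prop :=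
  ∀ ε > (0 : ℝ), ∃ δ > (0 : ℝ), ∀ r₁ : RelRep E H, r₁.IsUnitary →
    E.distLt r.η r₁.η δ →
      ∃ U : X → (H →L[ℂ] H), MeasurableField U ∧
        (∀ᵐ x ∂μ, U x ∈ unitary (H →L[ℂ] H) ∧ ‖1 - U x‖ < ε) ∧
        E.ConjugatedBy r₁.η r.η U

end RelReps

/-- An equivalence relation `E` is unitarizable if every representation of `E` on a Hilbert
space admits a measurable unitarizing field of invertible operators, essentially uniformly
bounded together with its inverses. -/
def CountableMPRel.Unitarizable (E : CountableMPRel X μ) : Prop :=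
  ∀ (H : Type) (_ : NormedAddCommGroup H) (_ : InnerProductSpace ℂ H) (_ : CompleteSpace H)
    (r : RelRep E H), ∃ B : X → (H →L[ℂ] H)ˣ,
      (∀ v : H, BorelMeas fun x => ((B x : H →L[ℂ] H) v)) ∧
      (∃ K : ℝ, ∀ᵐ x ∂μ, ‖(B x : H →L[ℂ] H)‖ ≤ K ∧
        ‖(((B x)⁻¹ : (H →L[ℂ] H)ˣ) : H →L[ℂ] H)‖ ≤ K) ∧
      E.aePairs fun x y =>
        star (r.η x y : H →L[ℂ] H) * (B y : H →L[ℂ] H) * (r.η x y : H →L[ℂ] H)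
          = (B x : H →L[ℂ] H)

/-- An equivalence relation `E` is strongly Ulam stable if unitary quasi-representations of `E`
with small enough defect are close to genuine unitary representations of `E` on the same space. -/
def CountableMPRel.StronglyUlamStableRel (E : CountableMPRel X μ) : Prop :=
  ∀ ε > (0 : ℝ), ∃ δ > (0 : ℝ), ∀ (H : Type) (_ : NormedAddCommGroup H)
    (_ : InnerProductSpace ℂ H) (_ : CompleteSpace H) (q : RelQuasiRep E H),
    q.IsUnitary → q.DefectLt δ →
      ∃ r : RelRep E H, r.IsUnitary ∧ E.distLt q.η r.η ε

/-- A bundled unitary representation of the relation `E` on some complex Hilbert space. -/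
structure RelURep (E : CountableMPRel X μ) where
  carrier : Type
  [normed : NormedAddCommGroup carrier]
  [ips : InnerProductSpace ℂ carrier]
  [complete : CompleteSpace carrier]
  rep : RelRep E carrier
  unitary' : rep.IsUnitary

attribute [instance] RelURep.normed RelURep.ips RelURep.complete

/-- `E` has a unitary representation that is not strongly rigid. -/
def CountableMPRel.HasNonStronglyRigidRep (E : CountableMPRel X μ) : Prop :=
  ∃ r : RelURep E, ¬ r.rep.IsStronglyRigid

end LampStability

end
noncomputable section

namespace LampStability

open scoped ENNReal

/-! ## Fibered Hilbert spaces `L²(X, μ, H)` and fibered operators -/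

section Fibered

variable {X : Type*} [MeasurableSpace X] {μ : MeasureTheory.Measure X}
variable {H : Type*} [NormedAddCommGroup H] [InnerProductSpace ℂ H] [CompleteSpace H]

/-- The projector `P_C` on `L²(X, μ, H)`: restriction (multiplication by the indicator
function) to a measurable set `C`. -/
def projC {C : Set X} (hC : MeasurableSet C) (f : MeasureTheory.Lp H 2 μ) :
    MeasureTheory.Lp H 2 μ :=
  (((MeasureTheory.Lp.memLp f).indicator hC).toLp (C.indicator f))

/-- A bounded operator on `L²(X, μ, H)` is totally fibered if it commutes with all the
projectors `P_C`, `C ⊆ X` measurable. -/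
def TotallyFibered (B : MeasureTheory.Lp H 2 μ →L[ℂ] MeasureTheory.Lp H 2 μ) : Prop :=
  ∀ (C : Set X) (hC : MeasurableSet C) (f : MeasureTheory.Lp H 2 μ),
    B (projC hC f) = projC hC (B f)

/-- `(Bx)` is an explicit fibered form of the operator `B` on `L²(X, μ, H)`: a measurable
field of operators on `H` with essentially bounded norms acting fiberwise as `B` does. -/
def ExplicitFiberedForm (B : MeasureTheory.Lp H 2 μ →L[ℂ] MeasureTheory.Lp H 2 μ)
    (Bx : X → (H →L[ℂ] H)) : Prop :=
  (∀ v : H, BorelMeas fun x => Bx x v) ∧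
  essSup (fun x => (‖Bx x‖₊ : ℝ≥0∞)) μ < ⊤ ∧
  ∀ f : MeasureTheory.Lp H 2 μ, (B f : X → H) =ᵐ[μ] fun x => Bx x (f x)

/-- The (generalized) Koopman operator on `L²(X, μ, H)` associated with a measure-preserving
automorphism `T` of `(X, μ)`: `(U_T f)(x) = f (T⁻¹ x)`. -/
def koopman (T : X ≃ᵐ X) (hT : MeasureTheory.MeasurePreserving T μ μ)
    (f : MeasureTheory.Lp H 2 μ) : MeasureTheory.Lp H 2 μ :=
  MeasureTheory.Lp.compMeasurePreserving (T.symm : X → X)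
    (MeasureTheory.MeasurePreserving.symm T hT) f

/-- An operator `Q` on `L²(X, μ, H)` is skew-fibered over a measure-preserving automorphism
`T` if it is the composition of the Koopman operator of `T` and a totally fibered operator. -/
def SkewFibered (Q : MeasureTheory.Lp H 2 μ →L[ℂ] MeasureTheory.Lp H 2 μ)
    (T : X ≃ᵐ X) (hT : MeasureTheory.MeasurePreserving T μ μ) : Prop :=
  ∃ B : MeasureTheory.Lp H 2 μ →L[ℂ] MeasureTheory.Lp H 2 μ,
    TotallyFibered B ∧ ∀ f : MeasureTheory.Lp H 2 μ, Q f = koopman T hT (B f)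

/-! ## Bounded measurable functions and multiplication operators -/

end Fibered

/-- A bounded measurable complex-valued function on `X` (a representative of an element
of `L^∞(X, μ)`). -/
structure BddMeasFun (X : Type*) [MeasurableSpace X] where
  toFun : X → ℂ
  measurable : Measurable toFun
  bound : ℝ
  le_bound : ∀ x : X, ‖toFun x‖ ≤ bound

section Fibered2

variable {X : Type*} [MeasurableSpace X] {μ : MeasureTheory.Measure X}
variable {H : Type*} [NormedAddCommGroup H] [InnerProductSpace ℂ H] [CompleteSpace H]

/-- The multiplication operator `M_ψ` on `L²(X, μ, H)` given by a bounded measurable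
function `ψ`. -/
def mulOp (ψ : BddMeasFun X) (f : MeasureTheory.Lp H 2 μ) : MeasureTheory.Lp H 2 μ :=
  (MeasureTheory.MemLp.smul (r := 2) (MeasureTheory.Lp.memLp f)
    (MeasureTheory.memLp_top_of_bound ψ.measurable.aestronglyMeasurable ψ.bound
      (Filter.Eventually.of_forall ψ.le_bound))).toLp (ψ.toFun • (f : X → H))

/-- Composition of a bounded measurable function with a measurable map. -/
def BddMeasFun.compMap (ψ : BddMeasFun X) (T : X → X) (hT : Measurable T) : BddMeasFun X :=
  ⟨fun x => ψ.toFun (T x), ψ.measurable.comp hT, ψ.bound, fun _ => ψ.le_bound _⟩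

/-- A set `S` of bounded measurable functions is weakly spanning in `L^∞(X, μ)` (its linear
span is dense in the weak-* topology): equivalently, `S` separates `L¹(X, μ)`. -/
def WeaklySpanning (μ : MeasureTheory.Measure X) (S : Set (BddMeasFun X)) : Prop :=
  ∀ f : X → ℂ, MeasureTheory.Integrable f μ →
    (∀ ψ ∈ S, ∫ x, ψ.toFun x * f x ∂μ = 0) → f =ᵐ[μ] 0

/-! ## Fibered (quasi-)representations of group actions -/

variable {N : Type*} [Group N]

/-- A quasi-representation of the action `a : N ↷ (X, μ)` fibered over the action, with fiber
the Hilbert space `H`: a measurable, essentially uniformly bounded field of invertible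
operators `op g x`, with `op 1 x = Id` a.e. -/
structure FiberedQuasiRep (a : MPAction N X μ) (H : Type*) [NormedAddCommGroup H]
    [InnerProductSpace ℂ H] [CompleteSpace H] where
  op : N → X → (H →L[ℂ] H)ˣ
  measurable : ∀ (g : N) (v : H), BorelMeas fun x => ((op g x : H →L[ℂ] H) v)
  one_ae : ∀ᵐ x ∂μ, op 1 x = 1
  bounded : ∃ K : ℝ, ∀ g : N, ∀ᵐ x ∂μ, ‖(op g x : H →L[ℂ] H)‖ ≤ K

/-- The cocycle identity: a fibered quasi-representation is a fibered representation. -/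
def FiberedQuasiRep.IsRep {a : MPAction N X μ} {H : Type*} [NormedAddCommGroup H]
    [InnerProductSpace ℂ H] [CompleteSpace H] (q : FiberedQuasiRep a H) : Prop :=
  ∀ g₁ g₂ : N, ∀ᵐ x ∂μ, q.op g₁ (a.toFun g₂ x) * q.op g₂ x = q.op (g₁ * g₂) x

/-- The family of operators `Φ` on `L²(X, μ, H)` is induced by the fibered
quasi-representation `q` over the action `a`: `(Φ g f)(g x) = q.op g x (f x)`. -/
def FiberedQuasiRep.Induces {a : MPAction N X μ} {H : Type*} [NormedAddCommGroup H]
    [InnerProductSpace ℂ H] [CompleteSpace H] (q : FiberedQuasiRep a H)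
    (Φ : N → (MeasureTheory.Lp H 2 μ →L[ℂ] MeasureTheory.Lp H 2 μ)) : Prop :=
  ∀ (g : N) (f : MeasureTheory.Lp H 2 μ), (Φ g f : X → H) =ᵐ[μ]
    fun y => (q.op g (a.toFun g⁻¹ y) : H →L[ℂ] H) (f (a.toFun g⁻¹ y))

/-- `B` is a unitarizing operator for the family of operators `Φ` on the Hilbert space `K`:
`Φ(g)* B Φ(g) = B` for all `g`, and `B` is bounded below as a quadratic form. -/
def IsUnitarizing {K : Type*} [NormedAddCommGroup K] [InnerProductSpace ℂ K]
    [CompleteSpace K] {N' : Type*} (Φ : N' → (K →L[ℂ] K)) (B : K →L[ℂ] K) : Prop :=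
  (∀ g : N', star (Φ g) * B * Φ g = B) ∧
  ∃ c > (0 : ℝ), ∀ v : K, c * ‖v‖ ^ 2 ≤ (inner ℂ (B v) v : ℂ).re

end Fibered2

/-! ## Orbit equivalence relations -/

variable {X : Type*} [MeasurableSpace X] {μ : MeasureTheory.Measure X}

/-- `E` is the orbit equivalence relation of the action `a`. -/
def CountableMPRel.IsOrbitRelOf (E : CountableMPRel X μ) {N : Type*} [Group N]
    (a : MPAction N X μ) : Prop :=
  ∀ x y : X, E.rel x y ↔ ∃ n : N, a.toFun n x = y

/-- The character of the Bernoulli space `X = Y^G` (`Y = Â` the Pontryagin dual of `A`)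
associated with an element of `⊕_G A` via Pontryagin duality. -/
def charOf {G A : Type*} [Group G] [CommGroup A] [TopologicalSpace A]
    (h : restrictedProduct G A) (t : G → PontryaginDual A) : ℂ :=
  ∏ᶠ g : G, (((t g) ((h : G → A) g) : Circle) : ℂ)

end LampStability

end

noncomputable section SUaux
namespace SU

lemma star_conj_inv {R : Type*} [Monoid R] [StarMul R] (s t a : R)
    (hts : t * s = 1) (h : star (s * a * t) * (s * a * t) = 1) :
    star a * (star s * s) * a = star s * s := by
  have h1 : star s * star t = 1 := by rw [← star_mul, hts, star_one]
  have h' : star t * (star a * (star s * (s * (a * t)))) = 1 := by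
    simpa [star_mul, mul_assoc] using h
  have key : star s * s
      = (star s * star t) * (star a * (star s * s) * a) * (t * s) := by
    calc star s * s = star s * 1 * s := by rw [mul_one]
      _ = star s * (star t * (star a * (star s * (s * (a * t))))) * s := by rw [h']
      _ = (star s * star t) * (star a * (star s * s) * a) * (t * s) := by
          simp [mul_assoc]
  rw [h1, hts, one_mul, mul_one] at key
  exact key.symm

lemma star_unit_conj {R : Type*} [Monoid R] [StarMul R] (b p q : R)
    (hb : star b = b) (hbq : b * q = 1)
    (h : star p * (b * b) * p = b * b) : star (b * p * q) * (b * p * q) = 1 := by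
  have hq : star q * b = 1 := by rw [← hb, ← star_mul, hbq, star_one]
  calc star (b * p * q) * (b * p * q)
      = star q * ((star p * (b * b) * p) * q) := by simp [star_mul, hb, mul_assoc]
    _ = star q * (b * (b * q)) := by rw [h, mul_assoc]
    _ = 1 := by rw [hbq, mul_one, hq]

variable {H : Type} [NormedAddCommGroup H] [InnerProductSpace ℂ H] [CompleteSpace H]
variable {ι : Type}

lemma memℓp_shift (e : ι → ι) (he : Function.Injective e) (T : ι → H →L[ℂ] H) {C : ℝ}
    (hC : 0 ≤ C) (hT : ∀ i, ‖T i‖ ≤ C) (f : lp (fun _ : ι => H) 2) :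
    Memℓp (fun i => (T i) (f (e i))) 2 := by
  apply memℓp_gen
  have hf2 : Summable fun i => ‖f (e i)‖ ^ (2 : ENNReal).toReal :=
    ((lp.memℓp f).summable (by norm_num)).comp_injective he
  refine Summable.of_nonneg_of_le (fun i => Real.rpow_nonneg (norm_nonneg _) _)
    (fun i => ?_) (hf2.mul_left (C ^ (2 : ENNReal).toReal))
  calc ‖(T i) (f (e i))‖ ^ (2 : ENNReal).toReal
      ≤ (C * ‖f (e i)‖) ^ (2 : ENNReal).toReal := by
        refine Real.rpow_le_rpow (norm_nonneg _) ?_ (by norm_num)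
        exact ((T i).le_opNorm _).trans
          (mul_le_mul_of_nonneg_right (hT i) (norm_nonneg _))
    _ = C ^ (2 : ENNReal).toReal * ‖f (e i)‖ ^ (2 : ENNReal).toReal :=
        Real.mul_rpow hC (norm_nonneg _)

/-- The bounded operator on `ℓ²(ι, H)` given by composing a uniformly bounded field of
operators with an injective reindexing. -/
def shiftCLM (e : ι → ι) (he : Function.Injective e) (T : ι → H →L[ℂ] H) (C : ℝ)
    (hC : 0 ≤ C) (hT : ∀ i, ‖T i‖ ≤ C) :
    lp (fun _ : ι => H) 2 →L[ℂ] lp (fun _ : ι => H) 2 :=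
  LinearMap.mkContinuous
    { toFun := fun f => (⟨fun i => (T i) (f (e i)), memℓp_shift e he T hC hT f⟩ :
        lp (fun _ : ι => H) 2)
      map_add' := fun f g => by
        apply lp.ext
        funext i
        simp only [lp.coeFn_add, Pi.add_apply]
        exact map_add (T i) _ _
      map_smul' := fun c f => by
        apply lp.ext
        funext i
        simp only [lp.coeFn_smul, Pi.smul_apply, RingHom.id_apply]
        exact map_smul (T i) c _ }
    C
    (by
      intro f
      refine lp.norm_le_of_tsum_le (by norm_num)
        (mul_nonneg hC (norm_nonneg f)) ?_
      have h1 : ∀ i, ‖(T i) (f (e i))‖ ^ (2 : ENNReal).toReal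
          ≤ C ^ (2 : ENNReal).toReal * ‖f (e i)‖ ^ (2 : ENNReal).toReal := by
        intro i
        rw [← Real.mul_rpow hC (norm_nonneg _)]
        refine Real.rpow_le_rpow (norm_nonneg _) ?_ (by norm_num)
        exact ((T i).le_opNorm _).trans
          (mul_le_mul_of_nonneg_right (hT i) (norm_nonneg _))
      have hsum : Summable fun i => ‖f (e i)‖ ^ (2 : ENNReal).toReal :=
        ((lp.memℓp f).summable (by norm_num)).comp_injective he
      calc (∑' i, ‖(T i) (f (e i))‖ ^ (2 : ENNReal).toReal)
          ≤ ∑' i, C ^ (2 : ENNReal).toReal * ‖f (e i)‖ ^ (2 : ENNReal).toReal := by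
            refine Summable.tsum_le_tsum h1 ?_ (hsum.mul_left _)
            exact Summable.of_nonneg_of_le
              (fun i => Real.rpow_nonneg (norm_nonneg _) _) h1 (hsum.mul_left _)
        _ = C ^ (2 : ENNReal).toReal * ∑' i, ‖f (e i)‖ ^ (2 : ENNReal).toReal :=
            tsum_mul_left
        _ ≤ C ^ (2 : ENNReal).toReal * ∑' i, ‖f i‖ ^ (2 : ENNReal).toReal := by
            refine mul_le_mul_of_nonneg_left ?_ (Real.rpow_nonneg hC _)
            exact Summable.tsum_le_tsum_of_inj e he
              (fun c _ => Real.rpow_nonneg (norm_nonneg _) _) (fun i => le_rfl)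
              hsum ((lp.memℓp f).summable (by norm_num))
        _ = C ^ (2 : ENNReal).toReal * ‖f‖ ^ (2 : ENNReal).toReal := by
            rw [lp.norm_rpow_eq_tsum (by norm_num) f]
        _ = (C * ‖f‖) ^ (2 : ENNReal).toReal := (Real.mul_rpow hC (norm_nonneg f)).symm)

@[simp] lemma shiftCLM_apply (e : ι → ι) (he : Function.Injective e)
    (T : ι → H →L[ℂ] H) (C : ℝ) (hC : 0 ≤ C) (hT : ∀ i, ‖T i‖ ≤ C)
    (f : lp (fun _ : ι => H) 2) (i : ι) :
    (shiftCLM e he T C hC hT f : ∀ _ : ι, H) i = (T i) (f (e i)) := rfl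

lemma norm_shiftCLM_le (e : ι → ι) (he : Function.Injective e)
    (T : ι → H →L[ℂ] H) (C : ℝ) (hC : 0 ≤ C) (hT : ∀ i, ‖T i‖ ≤ C) :
    ‖shiftCLM e he T C hC hT‖ ≤ C :=
  LinearMap.mkContinuous_norm_le _ hC _

/-- The inclusion of `H` in `ℓ²(ι, H)` at a given index, as a linear isometry. -/
def iotaLI [DecidableEq ι] (c₀ : ι) : H →ₗᵢ[ℂ] lp (fun _ : ι => H) 2 where
  toLinearMap :=
    { toFun := fun v => lp.single 2 c₀ v
      map_add' := fun v w => by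
        apply lp.ext
        funext j
        by_cases hj : j = c₀
        · subst hj
          simp only [lp.coeFn_add, Pi.add_apply]
          simp [lp.single_apply_self]
        · simp only [lp.coeFn_add, Pi.add_apply]
          simp [lp.single_apply_ne _ _ _ hj]
      map_smul' := fun c v => by simpa using lp.single_smul 2 c₀ v c }
  norm_map' := fun v => by
    simpa using lp.norm_single (p := 2) (E := fun _ : ι => H) (by norm_num)
      (fun _ : ι => v) c₀

@[simp] lemma iotaLI_apply [DecidableEq ι] (c₀ : ι) (v : H) :
    iotaLI (H := H) c₀ v = lp.single 2 c₀ v := by rfl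

variable {G : Type} [Group G] {K : Subgroup G}

lemma mk_mul_smul (g x : G) :
    (QuotientGroup.mk (g * x) : G ⧸ K) = g • (QuotientGroup.mk x : G ⧸ K) := rfl

lemma alpha_mem (g : G) (c : G ⧸ K) :
    (c.out)⁻¹ * g * ((g⁻¹ • c).out) ∈ K := by
  have h1 : (QuotientGroup.mk (g * (g⁻¹ • c).out) : G ⧸ K) = c := by
    rw [mk_mul_smul, QuotientGroup.out_eq', smul_inv_smul]
  have h2 : (QuotientGroup.mk c.out : G ⧸ K) = QuotientGroup.mk (g * (g⁻¹ • c).out) := by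
    rw [h1, QuotientGroup.out_eq']
  have h3 := QuotientGroup.eq.mp h2
  rwa [← mul_assoc] at h3

/-- The `K`-valued cocycle on `G × G/K` associated with the choice of coset
representatives. -/
def alpha (g : G) (c : G ⧸ K) : K := ⟨(c.out)⁻¹ * g * ((g⁻¹ • c).out), alpha_mem g c⟩

lemma alpha_one (c : G ⧸ K) : alpha (K := K) 1 c = 1 := by
  apply Subtype.ext
  simp [alpha]

lemma alpha_mul (g₁ g₂ : G) (c : G ⧸ K) :
    alpha (K := K) g₁ c * alpha g₂ (g₁⁻¹ • c) = alpha (g₁ * g₂) c := by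
  apply Subtype.ext
  have h : ((g₁ * g₂)⁻¹ • c) = g₂⁻¹ • (g₁⁻¹ • c) := by
    rw [mul_inv_rev, mul_smul]
  show (c.out)⁻¹ * g₁ * ((g₁⁻¹ • c).out) *
      ((g₁⁻¹ • c).out⁻¹ * g₂ * ((g₂⁻¹ • (g₁⁻¹ • c)).out))
      = (c.out)⁻¹ * (g₁ * g₂) * (((g₁ * g₂)⁻¹ • c).out)
  rw [h]
  group

lemma smul_base_fixed (k : K) :
    (k : G)⁻¹ • (QuotientGroup.mk 1 : G ⧸ K) = QuotientGroup.mk 1 := by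
  show (QuotientGroup.mk ((k : G)⁻¹ * 1) : G ⧸ K) = QuotientGroup.mk 1
  rw [QuotientGroup.eq]
  simpa using k.2

lemma smul_base_fixed' (k : K) :
    (k : G) • (QuotientGroup.mk 1 : G ⧸ K) = QuotientGroup.mk 1 := by
  show (QuotientGroup.mk ((k : G) * 1) : G ⧸ K) = QuotientGroup.mk 1
  rw [QuotientGroup.eq]
  simpa using K.inv_mem k.2

/-- The induced representation of `G` on `ℓ²(G/K, H)` associated with a uniformly bounded
representation `π` of a subgroup `K ≤ G`, as a homomorphism into the multiplicative monoid
of bounded operators. -/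
def indRep (K : Subgroup G) (π : K →* (H →L[ℂ] H)ˣ) (C : ℝ) (hC : 0 ≤ C)
    (hπ : ∀ k : K, ‖((π k : (H →L[ℂ] H)ˣ) : H →L[ℂ] H)‖ ≤ C) :
    G →* (lp (fun _ : G ⧸ K => H) 2 →L[ℂ] lp (fun _ : G ⧸ K => H) 2) where
  toFun g := shiftCLM (fun c => g⁻¹ • c) (MulAction.injective g⁻¹)
    (fun c => ((π (alpha g c) : (H →L[ℂ] H)ˣ) : H →L[ℂ] H)) C hC (fun _ => hπ _)
  map_one' := by
    apply ContinuousLinearMap.ext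
    intro f
    apply lp.ext
    funext c
    show ((π (alpha (1 : G) c) : (H →L[ℂ] H)ˣ) : H →L[ℂ] H) (f ((1 : G)⁻¹ • c)) = _
    rw [alpha_one, map_one]
    simp
  map_mul' g₁ g₂ := by
    apply ContinuousLinearMap.ext
    intro f
    apply lp.ext
    funext c
    show ((π (alpha (g₁ * g₂) c) : (H →L[ℂ] H)ˣ) : H →L[ℂ] H) (f ((g₁ * g₂)⁻¹ • c))
        = ((π (alpha g₁ c) : (H →L[ℂ] H)ˣ) : H →L[ℂ] H)
            (((π (alpha g₂ (g₁⁻¹ • c)) : (H →L[ℂ] H)ˣ) : H →L[ℂ] H)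
              (f (g₂⁻¹ • (g₁⁻¹ • c))))
    rw [← alpha_mul g₁ g₂ c, map_mul]
    have h : (g₁ * g₂)⁻¹ • c = g₂⁻¹ • (g₁⁻¹ • c) := by rw [mul_inv_rev, mul_smul]
    rw [h]
    rfl

lemma norm_indRep_le (K : Subgroup G) (π : K →* (H →L[ℂ] H)ˣ) (C : ℝ) (hC : 0 ≤ C)
    (hπ : ∀ k : K, ‖((π k : (H →L[ℂ] H)ˣ) : H →L[ℂ] H)‖ ≤ C) (g : G) :
    ‖indRep K π C hC hπ g‖ ≤ C := by
  show ‖shiftCLM (fun c => g⁻¹ • c) (MulAction.injective g⁻¹)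
    (fun c => ((π (alpha g c) : (H →L[ℂ] H)ˣ) : H →L[ℂ] H)) C hC (fun _ => hπ _)‖ ≤ C
  exact norm_shiftCLM_le _ _ _ _ _ _

lemma indRep_apply (π : K →* (H →L[ℂ] H)ˣ) (C : ℝ) (hC : 0 ≤ C)
    (hπ : ∀ k : K, ‖((π k : (H →L[ℂ] H)ˣ) : H →L[ℂ] H)‖ ≤ C) (g : G)
    (f : lp (fun _ : G ⧸ K => H) 2) (c : G ⧸ K) :
    (indRep K π C hC hπ g f : ∀ _ : G ⧸ K, H) c
      = ((π (alpha g c) : (H →L[ℂ] H)ˣ) : H →L[ℂ] H) (f (g⁻¹ • c)) := rfl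

lemma indRep_single [DecidableEq (G ⧸ K)] (π : K →* (H →L[ℂ] H)ˣ) (C : ℝ) (hC : 0 ≤ C)
    (hπ : ∀ k : K, ‖((π k : (H →L[ℂ] H)ˣ) : H →L[ℂ] H)‖ ≤ C) (k : K) (v : H) :
    indRep K π C hC hπ (k : G) (lp.single 2 (QuotientGroup.mk 1 : G ⧸ K) v)
      = lp.single 2 (QuotientGroup.mk 1 : G ⧸ K)
          (((π (alpha (k : G) (QuotientGroup.mk 1)) : (H →L[ℂ] H)ˣ) : H →L[ℂ] H) v) := by
  apply lp.ext
  funext c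
  rw [indRep_apply]
  by_cases hc : c = (QuotientGroup.mk 1 : G ⧸ K)
  · subst hc
    rw [smul_base_fixed, lp.single_apply_self, lp.single_apply_self]
  · have hne : (k : G)⁻¹ • c ≠ (QuotientGroup.mk 1 : G ⧸ K) := by
      intro h
      apply hc
      have h2 := congrArg (fun x => (k : G) • x) h
      simp only [smul_inv_smul] at h2
      rw [smul_base_fixed'] at h2
      exact h2
    rw [lp.single_apply_ne _ _ _ hne, lp.single_apply_ne _ _ _ hc, map_zero]

lemma alpha_conj_surj (K : Subgroup G) :
    Function.Surjective
      (fun k : K => alpha (K := K) (k : G) (QuotientGroup.mk 1 : G ⧸ K)) := by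
  intro j
  set c₀ : G ⧸ K := QuotientGroup.mk 1 with hc₀
  have hout : c₀.out ∈ K := by
    have h1 : (QuotientGroup.mk c₀.out : G ⧸ K) = QuotientGroup.mk 1 :=
      QuotientGroup.out_eq' c₀
    have := QuotientGroup.eq.mp h1
    rwa [mul_one, inv_mem_iff] at this
  set t₁ : K := ⟨c₀.out, hout⟩ with ht₁
  refine ⟨t₁ * j * t₁⁻¹, ?_⟩
  apply Subtype.ext
  show (c₀.out)⁻¹ * ((t₁ * j * t₁⁻¹ : K) : G) * ((((t₁ * j * t₁⁻¹ : K) : G))⁻¹ • c₀).out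
      = (j : G)
  rw [smul_base_fixed (t₁ * j * t₁⁻¹)]
  show (c₀.out)⁻¹ * (c₀.out * (j : G) * (c₀.out)⁻¹) * c₀.out = (j : G)
  group

end SU
end SUaux

set_option maxHeartbeats 1000000 in
/-- **Theorem (Statement 5).** Every subgroup of a unitarizable countable group is
unitarizable. -/
theorem subgroup_unitarizableGroup (G : Type) [Group G] [Countable G]
    (hG : UnitarizableGroup G) (K : Subgroup G) : UnitarizableGroup K := by
  classical
  intro H _ _ _ π hπb
  rcases subsingleton_or_nontrivial H with hH | hH
  · -- trivial Hilbert space: everything is unitary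
    haveI : Subsingleton (H →L[ℂ] H) := by
      constructor; intro a b; ext v; exact Subsingleton.elim _ _
    exact ⟨1, fun k => Unitary.mem_iff.mpr ⟨Subsingleton.elim _ _, Subsingleton.elim _ _⟩⟩
  -- notation
  obtain ⟨C₀, hC₀⟩ := hπb
  set C : ℝ := max C₀ 1 with hCdef
  have hC0 : (0 : ℝ) ≤ C := le_trans zero_le_one (le_max_right _ _)
  have hπC : ∀ k : K, ‖((π k : (H →L[ℂ] H)ˣ) : H →L[ℂ] H)‖ ≤ C :=
    fun k => (hC₀ k).trans (le_max_left _ _)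
  set V := lp (fun _ : G ⧸ K => H) 2 with hVdef
  set A : G →* (V →L[ℂ] V) := SU.indRep K π C hC0 hπC with hAdef
  set σ : G →* (V →L[ℂ] V)ˣ := A.toHomUnits with hσdef
  have hσval : ∀ g : G, ((σ g : (V →L[ℂ] V)ˣ) : V →L[ℂ] V) = A g := fun g => rfl
  -- the induced representation is uniformly bounded, hence unitarizable
  obtain ⟨S, hS⟩ : UnitarizableRep σ := by
    refine hG V _ _ _ σ ⟨C, fun g => ?_⟩
    rw [hσval]
    exact SU.norm_indRep_le K π C hC0 hπC g
  set s : V →L[ℂ] V := ((S : (V →L[ℂ] V)ˣ) : V →L[ℂ] V) with hsdef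
  set t : V →L[ℂ] V := ((S⁻¹ : (V →L[ℂ] V)ˣ) : V →L[ℂ] V) with htdef
  have hts : t * s = 1 := by
    rw [hsdef, htdef, ← Units.val_mul, inv_mul_cancel, Units.val_one]
  have hst : s * t = 1 := by
    rw [hsdef, htdef, ← Units.val_mul, mul_inv_cancel, Units.val_one]
  -- the invariant positive operator on the induced space
  have key : ∀ g : G, star (A g) * (star s * s) * (A g) = star s * s := by
    intro g
    refine SU.star_conj_inv s t (A g) hts ?_
    have hmem := (Unitary.mem_iff.mp (hS g)).1
    have hval : ((S * σ g * S⁻¹ : (V →L[ℂ] V)ˣ) : V →L[ℂ] V) = s * A g * t := by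
      rw [Units.val_mul, Units.val_mul, hσval]
    rwa [hval] at hmem
  -- compression to H
  set c₀ : G ⧸ K := QuotientGroup.mk 1 with hc₀def
  set ιc : H →L[ℂ] V := (SU.iotaLI (H := H) c₀).toContinuousLinearMap with hιdef
  have hιapp : ∀ v : H, ιc v = lp.single 2 c₀ v := fun v => rfl
  have hιnorm : ∀ v : H, ‖ιc v‖ = ‖v‖ := fun v => (SU.iotaLI (H := H) c₀).norm_map v
  set Bop : V →L[ℂ] V := star s * s with hBopdef
  set B₀ : H →L[ℂ] H := (ContinuousLinearMap.adjoint ιc) ∘L (Bop ∘L ιc) with hB₀def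
  have hB₀app : ∀ v : H, B₀ v = (ContinuousLinearMap.adjoint ιc) (Bop (ιc v)) := fun v => rfl
  have hB₀inner : ∀ v w : H, (inner ℂ (B₀ v) w : ℂ) = inner ℂ (Bop (ιc v)) (ιc w) := by
    intro v w
    rw [hB₀app]
    exact ContinuousLinearMap.adjoint_inner_left ιc _ _
  have hBopinner : ∀ x y : V, (inner ℂ (Bop x) y : ℂ) = inner ℂ (s x) (s y) := by
    intro x y
    have : Bop x = (ContinuousLinearMap.adjoint s) (s x) := by
      rw [hBopdef, ContinuousLinearMap.mul_apply, ContinuousLinearMap.star_eq_adjoint]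
    rw [this]
    exact ContinuousLinearMap.adjoint_inner_left s _ _
  -- positivity and coercivity of B₀
  have htpos : (0 : ℝ) < ‖t‖ := by
    rcases exists_ne (0 : H) with ⟨v₀, hv₀⟩
    have hιv₀ : ιc v₀ ≠ 0 := by
      intro h
      apply hv₀
      have := hιnorm v₀
      rw [h, norm_zero] at this
      exact norm_eq_zero.mp this.symm
    refine norm_pos_iff.mpr ?_
    intro h
    apply hιv₀
    have h1 : (t * s) (ιc v₀) = ιc v₀ := by rw [hts]; rfl
    rw [ContinuousLinearMap.mul_apply, h, ContinuousLinearMap.zero_apply] at h1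
    exact h1.symm
  have hts_apply : ∀ x : V, t (s x) = x := by
    intro x
    have h1 : (t * s) x = x := by rw [hts]; rfl
    rwa [ContinuousLinearMap.mul_apply] at h1
  have hlow : ∀ v : H, (‖t‖ ^ 2)⁻¹ * ‖v‖ ^ 2 ≤ (RCLike.re (inner ℂ (B₀ v) v : ℂ)) := by
    intro v
    have h1 : (RCLike.re (inner ℂ (B₀ v) v : ℂ)) = ‖s (ιc v)‖ ^ 2 := by
      rw [hB₀inner, hBopinner]
      exact inner_self_eq_norm_sq (s (ιc v))
    rw [h1]
    rw [inv_mul_le_iff₀ (by positivity)]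
    have h2 : ‖v‖ ≤ ‖t‖ * ‖s (ιc v)‖ := by
      calc ‖v‖ = ‖ιc v‖ := (hιnorm v).symm
        _ = ‖t (s (ιc v))‖ := by rw [hts_apply]
        _ ≤ ‖t‖ * ‖s (ιc v)‖ := t.le_opNorm _
    calc ‖v‖ ^ 2 ≤ (‖t‖ * ‖s (ιc v)‖) ^ 2 :=
          pow_le_pow_left₀ (norm_nonneg v) h2 2
      _ = ‖t‖ ^ 2 * ‖s (ιc v)‖ ^ 2 := by ring
  -- invariance of B₀ under π
  have hinterp : ∀ (k : K) (v : H),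
      A (k : G) (ιc v)
        = ιc (((π (SU.alpha (k : G) c₀) : (H →L[ℂ] H)ˣ) : H →L[ℂ] H) v) := by
    intro k v
    rw [hιapp, hιapp]
    exact SU.indRep_single π C hC0 hπC k v
  have hinv : ∀ j : K,
      star ((π j : (H →L[ℂ] H)ˣ) : H →L[ℂ] H) * B₀ * ((π j : (H →L[ℂ] H)ˣ) : H →L[ℂ] H)
        = B₀ := by
    intro j
    obtain ⟨k, hk⟩ := SU.alpha_conj_surj K j
    have hk' : SU.alpha (k : G) c₀ = j := by rw [hc₀def]; exact hk
    set p : H →L[ℂ] H := ((π j : (H →L[ℂ] H)ˣ) : H →L[ℂ] H) with hpdef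
    have hinterp' : ∀ v : H, A (k : G) (ιc v) = ιc (p v) := by
      intro v
      rw [hinterp k v, hk']
    ext v
    apply ext_inner_right ℂ
    intro w
    have lhs1 : (star p * B₀ * p) v = (ContinuousLinearMap.adjoint p) (B₀ (p v)) := by
      rw [ContinuousLinearMap.mul_apply, ContinuousLinearMap.mul_apply,
        ContinuousLinearMap.star_eq_adjoint]
    rw [lhs1, ContinuousLinearMap.adjoint_inner_left, hB₀inner, ← hinterp', ← hinterp']
    have step : (inner ℂ (Bop (A (k : G) (ιc v))) (A (k : G) (ιc w)) : ℂ)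
        = inner ℂ (Bop (ιc v)) (ιc w) := by
      rw [← ContinuousLinearMap.adjoint_inner_left (A (k : G))]
      have hreassoc : (ContinuousLinearMap.adjoint (A (k : G))) (Bop (A (k : G) (ιc v)))
          = (star (A (k : G)) * Bop * A (k : G)) (ιc v) := rfl
      rw [hreassoc, key]
    rw [step, ← hB₀inner]
  -- B₀ is positive
  have hBoppos : Bop.IsPositive := by
    have h1 := (ContinuousLinearMap.isPositive_one (E := V) (𝕜 := ℂ)).adjoint_conj s
    have h2 : (ContinuousLinearMap.adjoint s) ∘L ((1 : V →L[ℂ] V) ∘L s) = Bop := by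
      rw [ContinuousLinearMap.one_def, ContinuousLinearMap.id_comp]
      rw [hBopdef, ContinuousLinearMap.star_eq_adjoint]
      rfl
    rwa [h2] at h1
  have hB₀pos : B₀.IsPositive := by
    have h1 := hBoppos.adjoint_conj ιc
    rwa [hB₀def]
  have hB₀nonneg : (0 : H →L[ℂ] H) ≤ B₀ :=
    (ContinuousLinearMap.nonneg_iff_isPositive B₀).mpr hB₀pos
  -- B₀ is invertible
  have hbound : ∀ v : H, ‖v‖ ≤ (‖t‖ ^ 2) * ‖B₀ v‖ := by
    intro v
    rcases eq_or_ne v 0 with rfl | hv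
    · simp only [norm_zero, map_zero, mul_zero, le_refl]
    have hvpos : (0 : ℝ) < ‖v‖ := norm_pos_iff.mpr hv
    have h1 := hlow v
    have h2 : (RCLike.re (inner ℂ (B₀ v) v : ℂ)) ≤ ‖B₀ v‖ * ‖v‖ := by
      calc (RCLike.re (inner ℂ (B₀ v) v : ℂ)) ≤ ‖(inner ℂ (B₀ v) v : ℂ)‖ :=
            RCLike.re_le_norm _
        _ ≤ ‖B₀ v‖ * ‖v‖ := norm_inner_le_norm _ _
    have h3 : (‖t‖ ^ 2)⁻¹ * ‖v‖ ^ 2 ≤ ‖B₀ v‖ * ‖v‖ := h1.trans h2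
    have h4 : ‖v‖ ^ 2 ≤ ‖t‖ ^ 2 * (‖B₀ v‖ * ‖v‖) := by
      rwa [inv_mul_le_iff₀ (by positivity)] at h3
    have h5 : ‖v‖ * ‖v‖ ≤ (‖t‖ ^ 2 * ‖B₀ v‖) * ‖v‖ := by nlinarith
    exact le_of_mul_le_mul_right h5 hvpos
  have halip : AntilipschitzWith (‖t‖₊ ^ 2) B₀ := by
    refine B₀.antilipschitz_of_bound ?_
    intro v
    have hcoe : (((‖t‖₊ ^ 2 : NNReal)) : ℝ) = ‖t‖ ^ 2 := by push_cast; rfl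
    rw [hcoe]
    exact hbound v
  have hker : B₀.ker = ⊥ := LinearMap.ker_eq_bot.mpr (halip.injective)
  have hclosed : IsClosed (Set.range B₀) := halip.isClosed_range B₀.uniformContinuous
  have hrange : B₀.range = ⊤ := by
    set R : Submodule ℂ H := B₀.range with hRdef
    have hRclosed : IsClosed (R : Set H) := by
      rw [hRdef]
      exact hclosed
    haveI : CompleteSpace R := hRclosed.completeSpace_coe
    have horth : Rᗮ = ⊥ := by
      rw [Submodule.eq_bot_iff]
      intro w hw
      have h0 : (inner ℂ (B₀ w) w : ℂ) = 0 :=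
        (Submodule.mem_orthogonal R w).mp hw (B₀ w) (LinearMap.mem_range_self _ w)
      have h1 := hlow w
      rw [h0] at h1
      simp only [map_zero] at h1
      have h2 : ‖w‖ ^ 2 ≤ 0 := by
        have hc : (0 : ℝ) < (‖t‖ ^ 2)⁻¹ := by positivity
        nlinarith
      have : ‖w‖ = 0 := by nlinarith [sq_nonneg ‖w‖, norm_nonneg w]
      exact norm_eq_zero.mp this
    have hsup := Submodule.sup_orthogonal_of_hasOrthogonalProjection (K := R)
    rwa [horth, sup_bot_eq] at hsup
  have hBunit : IsUnit B₀ := by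
    set e := ContinuousLinearEquiv.ofBijective B₀ hker hrange with hedef
    have hecoe : ∀ v : H, e v = B₀ v := fun v => rfl
    refine ⟨⟨B₀, (e.symm : H →L[ℂ] H), ?_, ?_⟩, rfl⟩
    · ext v
      show B₀ (e.symm v) = v
      rw [← hecoe]
      exact e.apply_symm_apply v
    · ext v
      show e.symm (B₀ v) = v
      rw [← hecoe]
      exact e.symm_apply_apply v
  -- square root
  set S₀ : H →L[ℂ] H := CFC.sqrt B₀ with hS₀def
  have hsq : S₀ * S₀ = B₀ := CFC.sqrt_mul_sqrt_self B₀ hB₀nonneg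
  have hsa : star S₀ = S₀ := (IsSelfAdjoint.of_nonneg (CFC.sqrt_nonneg B₀)).star_eq
  set u : (H →L[ℂ] H)ˣ := hBunit.unit with hudef
  have hu : (u : H →L[ℂ] H) = B₀ := hBunit.unit_spec
  set b : H →L[ℂ] H := S₀ * ((u⁻¹ : (H →L[ℂ] H)ˣ) : H →L[ℂ] H) with hbdef
  have hright : S₀ * b = 1 := by
    rw [hbdef, ← mul_assoc, hsq, ← hu, Units.mul_inv]
  have hleft : b * S₀ = 1 := by
    have hc : ((u⁻¹ : (H →L[ℂ] H)ˣ) : H →L[ℂ] H) * S₀ * S₀ = 1 := by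
      rw [mul_assoc, hsq, ← hu, Units.inv_mul]
    have hbc : b = ((u⁻¹ : (H →L[ℂ] H)ˣ) : H →L[ℂ] H) * S₀ := by
      calc b = 1 * b := (one_mul b).symm
        _ = (((u⁻¹ : (H →L[ℂ] H)ˣ) : H →L[ℂ] H) * S₀ * S₀) * b := by rw [hc]
        _ = ((u⁻¹ : (H →L[ℂ] H)ˣ) : H →L[ℂ] H) * S₀ * (S₀ * b) := by
            rw [mul_assoc]
        _ = ((u⁻¹ : (H →L[ℂ] H)ˣ) : H →L[ℂ] H) * S₀ := by rw [hright, mul_one]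
    rw [hbc, mul_assoc, hsq, ← hu, Units.inv_mul]
  set Su : (H →L[ℂ] H)ˣ := ⟨S₀, b, hright, hleft⟩ with hSudef
  refine ⟨Su, fun g => ?_⟩
  have hval : ((Su * π g * Su⁻¹ : (H →L[ℂ] H)ˣ) : H →L[ℂ] H)
      = S₀ * ((π g : (H →L[ℂ] H)ˣ) : H →L[ℂ] H) * b := by
    rw [Units.val_mul, Units.val_mul]
    rfl
  have h1 : star ((Su * π g * Su⁻¹ : (H →L[ℂ] H)ˣ) : H →L[ℂ] H)
      * ((Su * π g * Su⁻¹ : (H →L[ℂ] H)ˣ) : H →L[ℂ] H) = 1 := by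
    rw [hval]
    refine SU.star_unit_conj S₀ _ b hsa hright ?_
    rw [hsq]
    exact hinv g
  have h2 : ((Su * π g * Su⁻¹ : (H →L[ℂ] H)ˣ) : H →L[ℂ] H)
      * star ((Su * π g * Su⁻¹ : (H →L[ℂ] H)ˣ) : H →L[ℂ] H) = 1 := by
    set w := Su * π g * Su⁻¹ with hwdef
    have hstar : star ((w : (H →L[ℂ] H)ˣ) : H →L[ℂ] H)
        = ((w⁻¹ : (H →L[ℂ] H)ˣ) : H →L[ℂ] H) := by
      calc star ((w : (H →L[ℂ] H)ˣ) : H →L[ℂ] H)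
          = star ((w : (H →L[ℂ] H)ˣ) : H →L[ℂ] H)
            * (((w : (H →L[ℂ] H)ˣ) : H →L[ℂ] H)
              * ((w⁻¹ : (H →L[ℂ] H)ˣ) : H →L[ℂ] H)) := by
            rw [Units.mul_inv, mul_one]
        _ = (star ((w : (H →L[ℂ] H)ˣ) : H →L[ℂ] H)
            * ((w : (H →L[ℂ] H)ˣ) : H →L[ℂ] H))
              * ((w⁻¹ : (H →L[ℂ] H)ˣ) : H →L[ℂ] H) := by rw [mul_assoc]
        _ = ((w⁻¹ : (H →L[ℂ] H)ˣ) : H →L[ℂ] H) := by rw [h1, one_mul]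
    rw [hstar, Units.mul_inv]
  exact Unitary.mem_iff.mpr ⟨h1, h2⟩
end

section
/- Let G and N be countable groups with essentially free measure-preserving actions on a standard probability space (X,μ) forming an orbit inclusion of N into G, and assume the G-action is ergodic. Let π̄ be a fibered representation of G over the G-action with fiber H, let π be the induced operator representation of G on L²(X,μ,H), and let ρ' be the operator representation of N induced by the restriction of π̄ to N. If π is unitarizable with a unitarizing operator B that is totally fibered, then ρ' is unitarizable with the same unitarizing operator B. -/
section AuxStmt9
open MeasureTheory Filter LampStability
open scoped ENNReal Topology
set_option linter.unusedSectionVars false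

variable {X : Type*} [MeasurableSpace X] {μ : Measure X}
variable {H : Type*} [NormedAddCommGroup H] [InnerProductSpace ℂ H] [CompleteSpace H]

lemma aux_coeFn_projC {C : Set X} (hC : MeasurableSet C) (f : Lp H 2 μ) :
    (projC hC f : X → H) =ᵐ[μ] C.indicator f :=
  MemLp.coeFn_toLp _

lemma aux_projC_eq_self {C : Set X} (hC : MeasurableSet C) {f : Lp H 2 μ}
    (h : (f : X → H) =ᵐ[μ] C.indicator f) : projC hC f = f :=
  Lp.ext ((aux_coeFn_projC hC f).trans h.symm)

lemma aux_inner_zero {C D : Set X} (hdis : Disjoint C D) {u v : Lp H 2 μ} {φ ψ : X → H}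
    (hu : (u : X → H) =ᵐ[μ] C.indicator φ) (hv : (v : X → H) =ᵐ[μ] D.indicator ψ) :
    (inner ℂ u v : ℂ) = 0 := by
  rw [MeasureTheory.L2.inner_def]
  apply integral_eq_zero_of_ae
  filter_upwards [hu, hv] with x hx hy
  simp only [Pi.zero_apply]
  by_cases hxC : x ∈ C
  · have hxD : x ∉ D := fun hD => (Set.disjoint_left.mp hdis hxC) hD
    rw [hy, Set.indicator_of_notMem hxD, inner_zero_right]
  · rw [hx, Set.indicator_of_notMem hxC, inner_zero_left]

lemma aux_projC_union {C D : Set X} (hC : MeasurableSet C) (hD : MeasurableSet D)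
    (hdis : Disjoint C D) (f : Lp H 2 μ) :
    projC (hC.union hD) f = projC hC f + projC hD f := by
  apply Lp.ext
  filter_upwards [aux_coeFn_projC (hC.union hD) f, aux_coeFn_projC hC f,
    aux_coeFn_projC hD f, Lp.coeFn_add (projC hC f) (projC hD f)] with x e0 e1 e2 e3
  rw [e0, e3, Pi.add_apply, e1, e2, Set.indicator_union_of_disjoint hdis]

lemma aux_projC_add_compl {C : Set X} (hC : MeasurableSet C) (f : Lp H 2 μ) :
    projC hC f + projC hC.compl f = f := by
  apply Lp.ext
  filter_upwards [aux_coeFn_projC hC f, aux_coeFn_projC hC.compl f,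
    Lp.coeFn_add (projC hC f) (projC hC.compl f)] with x e1 e2 e3
  rw [e3, Pi.add_apply, e1, e2]
  have := congrFun (Set.indicator_self_add_compl C (f : X → H)) x
  simpa using this

lemma aux_projC_empty (hemp : MeasurableSet (∅ : Set X)) (f : Lp H 2 μ) :
    projC hemp f = 0 := by
  apply Lp.ext
  filter_upwards [aux_coeFn_projC hemp f, Lp.coeFn_zero H 2 μ] with x e1 e2
  rw [e1, e2]
  simp

lemma aux_tendsto_projC {A : ℕ → Set X} (hA : ∀ k, MeasurableSet (A k)) (hmono : Antitone A)
    (hnull : μ (⋂ k, A k) = 0) (f : Lp H 2 μ) :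
    Tendsto (fun k => ‖projC (hA k) f‖) atTop (𝓝 0) := by
  set g : X → ℝ≥0∞ := fun x => (‖f x‖₊ : ℝ≥0∞) ^ (2 : ℝ) with hgdef
  have hint : ∫⁻ x, g x ∂μ < ⊤ := by
    have h2 := MeasureTheory.lintegral_rpow_enorm_lt_top_of_eLpNorm_lt_top
      (f := (f : X → H)) (p := 2) (by norm_num) (by norm_num) (Lp.eLpNorm_lt_top f)
    simpa [hgdef, ENNReal.toReal_ofNat, enorm_eq_nnnorm] using h2
  set ν := μ.withDensity g with hνdef
  have hν : Tendsto (fun k => ν (A k)) atTop (𝓝 (ν (⋂ k, A k))) := by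
    have := tendsto_measure_iInter_atTop (μ := ν) (s := A)
      (fun k => (hA k).nullMeasurableSet) hmono
      ⟨0, by
        refine ne_of_lt (lt_of_le_of_lt ?_ hint)
        rw [hνdef, withDensity_apply g (hA 0)]
        exact setLIntegral_le_lintegral _ _⟩
    exact this
  have hν0 : ν (⋂ k, A k) = 0 := by
    rw [hνdef]
    exact (MeasureTheory.withDensity_absolutelyContinuous μ g) hnull
  rw [hν0] at hν
  have hval : ∀ k, ‖projC (hA k) f‖ = ((ν (A k)) ^ (1 / (2 : ℝ))).toReal := by
    intro k
    rw [show projC (hA k) f = ((Lp.memLp f).indicator (hA k)).toLp ((A k).indicator f) from rfl,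
      MeasureTheory.Lp.norm_toLp ((A k).indicator (f : X → H)) ((Lp.memLp f).indicator (hA k))]
    congr 1
    rw [eLpNorm_eq_lintegral_rpow_enorm_toReal (by norm_num) (by norm_num),
      hνdef, withDensity_apply g (hA k), ← lintegral_indicator (hA k)]
    rw [show ((2:ℝ≥0∞)).toReal = (2:ℝ) by norm_num]
    congr 1
    apply lintegral_congr
    intro x
    by_cases hx : x ∈ A k
    · simp [hx, hgdef, enorm_eq_nnnorm]
    · simp [hx, Set.indicator_of_notMem hx, hgdef,
        ENNReal.zero_rpow_of_pos (by norm_num : (0:ℝ) < 2)]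
  simp only [hval]
  have h1 : Tendsto (fun k => (ν (A k)) ^ (1 / (2 : ℝ))) atTop (𝓝 0) := by
    have hc : Continuous fun a : ℝ≥0∞ => a ^ (1 / (2 : ℝ)) := ENNReal.continuous_rpow_const
    have := (hc.tendsto 0).comp hν
    simpa [Function.comp_def, ENNReal.zero_rpow_of_pos (by norm_num : (0:ℝ) < 1 / 2)] using this
  have h2 : Tendsto ENNReal.toReal (𝓝 (0 : ℝ≥0∞)) (𝓝 (0 : ℝ≥0∞).toReal) :=
    ENNReal.tendsto_toReal (by simp)
  simpa [Function.comp_def] using h2.comp h1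

lemma aux_projC_congr {C D : Set X} (hC : MeasurableSet C) (hD : MeasurableSet D)
    (h : C = D) (f : Lp H 2 μ) : projC hC f = projC hD f := by
  subst h; rfl

lemma aux_ae_comp {T : X → X} (hT : MeasurePreserving T μ μ) {P : X → Prop}
    (h : ∀ᵐ x ∂μ, P x) : ∀ᵐ y ∂μ, P (T y) := by
  rw [MeasureTheory.ae_iff] at h ⊢
  have hsub : {y | ¬ P (T y)} ⊆ T ⁻¹' (toMeasurable μ {x | ¬ P x}) :=
    fun y hy => subset_toMeasurable μ _ hy
  refine measure_mono_null hsub ?_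
  rw [hT.measure_preimage (measurableSet_toMeasurable μ _).nullMeasurableSet]
  rwa [measure_toMeasurable]

end AuxStmt9

open LampStability in
/-- **Theorem (Statement 9).** Let essentially free measure-preserving actions of countable
groups `G` and `N` on a standard probability space `(X, μ)` form an orbit inclusion of `N`
into `G`, with the `G`-action ergodic. Let `π̄` (here `q`) be a fibered representation of `G`
over the `G`-action with fiber `H`, inducing the operator representation `Φ` of `G` on
`L²(X, μ, H)`, and let `ρ̄'` (here `r`), the restriction of `q` to `N`, induce the operator
representation `Ψ` of `N`. If `Φ` is unitarizable with a totally fibered unitarizing operator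
`B`, then `Ψ` is unitarizable with the same unitarizing operator `B`. -/
theorem fibered_unitarizing_operator_restricts
    (X : Type) [MeasurableSpace X] [StandardBorelSpace X]
    (μ : MeasureTheory.Measure X) [MeasureTheory.IsProbabilityMeasure μ]
    (G : Type) [Group G] [Countable G] (N : Type) [Group N] [Countable N]
    (aG : MPAction G X μ) (aN : MPAction N X μ)
    (hfreeG : aG.EssentiallyFree) (hfreeN : aN.EssentiallyFree)
    (horbit : ∀ n : N, ∀ᵐ x ∂μ, ∃ g : G, aN.toFun n x = aG.toFun g x)
    (hergodic : aG.ErgodicAct)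
    (H : Type) [NormedAddCommGroup H] [InnerProductSpace ℂ H] [CompleteSpace H]
    [SecondCountableTopology H]
    (q : FiberedQuasiRep aG H) (hq : q.IsRep)
    (Φ : G → (MeasureTheory.Lp H 2 μ →L[ℂ] MeasureTheory.Lp H 2 μ)) (hΦ : q.Induces Φ)
    (r : FiberedQuasiRep aN H)
    (hrestrict : ∀ n : N, ∀ᵐ x ∂μ, ∀ g : G,
      aN.toFun n x = aG.toFun g x → r.op n x = q.op g x)
    (Ψ : N → (MeasureTheory.Lp H 2 μ →L[ℂ] MeasureTheory.Lp H 2 μ)) (hΨ : r.Induces Ψ)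
    (B : MeasureTheory.Lp H 2 μ →L[ℂ] MeasureTheory.Lp H 2 μ)
    (hBfib : TotallyFibered B) (hB : IsUnitarizing Φ B) :
    IsUnitarizing Ψ B := by
  open MeasureTheory Filter Topology in
  · classical
    constructor
    · intro n
      obtain ⟨e, he⟩ := exists_surjective_nat G
      letI tX := upgradeStandardBorel X
      set D : ℕ → Set X := fun i => {x | aN.toFun n x = aG.toFun (e i) x} with hDdef
      have hDmeas : ∀ i, MeasurableSet (D i) := fun i =>
        (aN.measurable n).stronglyMeasurable.measurableSet_eq_fun
          (aG.measurable (e i)).stronglyMeasurable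
      set C : ℕ → Set X := disjointed D with hCdef
      have hCmeas : ∀ i, MeasurableSet (C i) := MeasurableSet.disjointed hDmeas
      have hCD : ∀ i, C i ⊆ D i := fun i => disjointed_subset D i
      have hCdis : Pairwise (Function.onFun Disjoint C) := disjoint_disjointed D
      set E : ℕ → Set X := fun i => aN.toFun n⁻¹ ⁻¹' (C i) with hEdef
      have hEmeas : ∀ i, MeasurableSet (E i) := fun i => (aN.measurable n⁻¹) (hCmeas i)
      have hEdis : Pairwise (Function.onFun Disjoint E) := fun i j hij => Disjoint.preimage _ (hCdis hij)
      -- basic action facts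
      have haNN : ∀ y, aN.toFun n (aN.toFun n⁻¹ y) = y := fun y => by
        rw [← aN.mul_apply, mul_inv_cancel, aN.one_apply]
      have haN_inj : Function.Injective (aN.toFun n) := fun x y h => by
        have h2 := congrArg (aN.toFun n⁻¹) h
        rwa [← aN.mul_apply, ← aN.mul_apply, inv_mul_cancel, aN.one_apply, aN.one_apply] at h2
      have haGG : ∀ (g : G) (x : X), aG.toFun g⁻¹ (aG.toFun g x) = x := fun g x => by
        rw [← aG.mul_apply, inv_mul_cancel, aG.one_apply]
      have haGG' : ∀ (g : G) (y : X), aG.toFun g (aG.toFun g⁻¹ y) = y := fun g y => by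
        rw [← aG.mul_apply, mul_inv_cancel, aG.one_apply]
      -- transported a.e. facts
      have h3gen : ∀ (i : ℕ) (f : MeasureTheory.Lp H 2 μ),
          (fun y => ((projC (hCmeas i) f : X → H) (aN.toFun n⁻¹ y))) =ᵐ[μ]
            (fun y => (C i).indicator f (aN.toFun n⁻¹ y)) := fun i f =>
        (aN.measurePreserving n⁻¹).quasiMeasurePreserving.ae_eq_comp (aux_coeFn_projC _ f)
      -- the key identification on pieces
      have key : ∀ (i : ℕ) (f : MeasureTheory.Lp H 2 μ),
          Ψ n (projC (hCmeas i) f) = Φ (e i) (projC (hCmeas i) f) := by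
        intro i f
        apply MeasureTheory.Lp.ext (μ := μ)
        have h4 : (fun y => ((projC (hCmeas i) f : X → H) (aG.toFun (e i)⁻¹ y))) =ᵐ[μ]
            (fun y => (C i).indicator f (aG.toFun (e i)⁻¹ y)) :=
          (aG.measurePreserving (e i)⁻¹).quasiMeasurePreserving.ae_eq_comp (aux_coeFn_projC _ f)
        have h5 : ∀ᵐ y ∂μ, ∀ g' : G,
            aN.toFun n (aN.toFun n⁻¹ y) = aG.toFun g' (aN.toFun n⁻¹ y) →
            r.op n (aN.toFun n⁻¹ y) = q.op g' (aN.toFun n⁻¹ y) :=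
          aux_ae_comp (aN.measurePreserving n⁻¹) (hrestrict n)
        filter_upwards [hΨ n (projC (hCmeas i) f), hΦ (e i) (projC (hCmeas i) f),
          h3gen i f, h4, h5] with y e1 e2 e3 e4 e5
        rw [e1, e2, e3, e4]
        by_cases hx : aN.toFun n⁻¹ y ∈ C i
        · have hD1 : aN.toFun n (aN.toFun n⁻¹ y) = aG.toFun (e i) (aN.toFun n⁻¹ y) := hCD i hx
          have hy : aG.toFun (e i) (aN.toFun n⁻¹ y) = y := by rw [← hD1, haNN]
          have hx2 : aG.toFun (e i)⁻¹ y = aN.toFun n⁻¹ y := by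
            conv_lhs => rw [← hy, haGG]
          rw [hx2, e5 (e i) hD1]
        · have hx2 : aG.toFun (e i)⁻¹ y ∉ C i := by
            intro hmem
            have hD2 : aN.toFun n (aG.toFun (e i)⁻¹ y) = aG.toFun (e i) (aG.toFun (e i)⁻¹ y) :=
              hCD i hmem
            rw [haGG'] at hD2
            have h6 : aG.toFun (e i)⁻¹ y = aN.toFun n⁻¹ y := haN_inj (by rw [hD2, haNN])
            rw [h6] at hmem; exact hx hmem
          rw [Set.indicator_of_notMem hx, Set.indicator_of_notMem hx2, map_zero, map_zero]
      -- support of Ψ n on pieces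
      have suppΨ : ∀ (i : ℕ) (f : MeasureTheory.Lp H 2 μ),
          (Ψ n (projC (hCmeas i) f) : X → H) =ᵐ[μ]
            (E i).indicator (Ψ n (projC (hCmeas i) f) : X → H) := by
        intro i f
        filter_upwards [hΨ n (projC (hCmeas i) f), h3gen i f] with y e1 e3
        by_cases hy : y ∈ E i
        · rw [Set.indicator_of_mem hy]
        · rw [Set.indicator_of_notMem hy, e1, e3,
            Set.indicator_of_notMem (show aN.toFun n⁻¹ y ∉ C i from hy), map_zero]
      have projΨ : ∀ (i : ℕ) (f : MeasureTheory.Lp H 2 μ),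
          projC (hEmeas i) (Ψ n (projC (hCmeas i) f)) = Ψ n (projC (hCmeas i) f) :=
        fun i f => aux_projC_eq_self (hEmeas i) (suppΨ i f)
      -- B-side supports
      have hBsuppE : ∀ (i : ℕ) (f : MeasureTheory.Lp H 2 μ),
          (B (Ψ n (projC (hCmeas i) f)) : X → H) =ᵐ[μ]
            (E i).indicator (B (Ψ n (projC (hCmeas i) f)) : X → H) := by
        intro i f
        have heq : B (Ψ n (projC (hCmeas i) f))
            = projC (hEmeas i) (B (Ψ n (projC (hCmeas i) f))) := by
          calc B (Ψ n (projC (hCmeas i) f))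
              = B (projC (hEmeas i) (Ψ n (projC (hCmeas i) f))) := by rw [projΨ]
            _ = projC (hEmeas i) (B (Ψ n (projC (hCmeas i) f))) := hBfib (E i) (hEmeas i) _
        have h := aux_coeFn_projC (hEmeas i) (B (Ψ n (projC (hCmeas i) f)))
        rw [← heq] at h
        exact h
      have hBsuppC : ∀ (i : ℕ) (f : MeasureTheory.Lp H 2 μ),
          (B (projC (hCmeas i) f) : X → H) =ᵐ[μ]
            (C i).indicator (B f : X → H) := by
        intro i f
        have h := aux_coeFn_projC (hCmeas i) (B f)
        rw [← hBfib (C i) (hCmeas i) f] at h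
        exact h
      -- diagonal identity from hB
      have diag : ∀ (g : G) (w w' : MeasureTheory.Lp H 2 μ),
          (inner ℂ (B (Φ g w)) (Φ g w') : ℂ) = inner ℂ (B w) w' := by
        intro g w w'
        have h := hB.1 g
        calc (inner ℂ (B (Φ g w)) (Φ g w') : ℂ)
            = inner ℂ ((ContinuousLinearMap.adjoint (Φ g)) (B (Φ g w))) w' := by
              rw [ContinuousLinearMap.adjoint_inner_left]
          _ = inner ℂ ((star (Φ g) * B * Φ g) w) w' := by
              rw [ContinuousLinearMap.star_eq_adjoint]; rfl
          _ = inner ℂ (B w) w' := by rw [h]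
      -- partial unions
      set F : ℕ → Set X := fun k => ⋃ i ∈ Finset.range k, C i with hFdef
      have hFmeas : ∀ k, MeasurableSet (F k) := fun k =>
        (Finset.range k).measurableSet_biUnion (fun i _ => hCmeas i)
      have hdisF : ∀ k, Disjoint (C k) (F k) := by
        intro k
        rw [Set.disjoint_iUnion₂_right]
        intro i hi
        exact hCdis (ne_of_lt (Finset.mem_range.mp hi)).symm
      have hsum : ∀ (k : ℕ) (f : MeasureTheory.Lp H 2 μ),
          projC (hFmeas k) f = ∑ i ∈ Finset.range k, projC (hCmeas i) f := by
        intro k f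
        induction k with
        | zero =>
          simp only [Finset.range_zero, Finset.sum_empty]
          rw [aux_projC_congr (hFmeas 0) MeasurableSet.empty (by simp [hFdef]) f]
          exact aux_projC_empty MeasurableSet.empty f
        | succ k ih =>
          have hstep : F (k + 1) = C k ∪ F k := by
            rw [hFdef]
            simp only [Finset.range_add_one, Finset.set_biUnion_insert]
          rw [aux_projC_congr (hFmeas (k + 1)) ((hCmeas k).union (hFmeas k)) hstep f,
            aux_projC_union (hCmeas k) (hFmeas k) (hdisF k) f, ih, Finset.sum_range_succ]
          abel
      -- null complement
      have hnull : μ (⋂ k, (F k)ᶜ) = 0 := by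
        have h1 : (⋂ k, (F k)ᶜ) = (⋃ i, C i)ᶜ := by
          rw [← Set.compl_iUnion]
          congr 1
          ext x
          simp only [Set.mem_iUnion, hFdef, Finset.mem_range]
          constructor
          · rintro ⟨k, i, hik, hx⟩; exact ⟨i, hx⟩
          · rintro ⟨i, hx⟩; exact ⟨i + 1, i, Nat.lt_succ_self i, hx⟩
        rw [h1, hCdef, iUnion_disjointed]
        have h2 := horbit n
        rw [MeasureTheory.ae_iff] at h2
        refine measure_mono_null ?_ h2
        intro x hx
        simp only [Set.mem_compl_iff, Set.mem_iUnion, hDdef, Set.mem_setOf_eq] at hx ⊢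
        rintro ⟨g, hg⟩
        obtain ⟨i, rfl⟩ := he g
        exact hx ⟨i, hg⟩
      -- convergence of the partial projections
      have htend : ∀ u : MeasureTheory.Lp H 2 μ,
          Filter.Tendsto (fun k => projC (hFmeas k) u) Filter.atTop (nhds u) := by
        intro u
        rw [tendsto_iff_norm_sub_tendsto_zero]
        have hAk : ∀ k, MeasurableSet (F k)ᶜ := fun k => (hFmeas k).compl
        have hFmono : Monotone F := by
          intro k l hkl
          apply Set.iUnion₂_subset
          intro i hi
          exact Set.subset_biUnion_of_mem (u := fun i => C i) (Finset.mem_range.mpr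
            (lt_of_lt_of_le (Finset.mem_range.mp hi) hkl))
        have hmono : Antitone (fun k => (F k)ᶜ) := fun k l hkl =>
          Set.compl_subset_compl.mpr (hFmono hkl)
        have hnorm : ∀ k, ‖projC (hFmeas k) u - u‖ = ‖projC (hAk k) u‖ := by
          intro k
          have h1 := aux_projC_add_compl (hFmeas k) u
          have h2 : projC (hFmeas k) u - u = -(projC (hAk k) u) := by
            calc projC (hFmeas k) u - u
                = projC (hFmeas k) u - (projC (hFmeas k) u + projC (hAk k) u) := by rw [h1]
              _ = -(projC (hAk k) u) := by abel
          rw [h2, norm_neg]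
        simp only [hnorm]
        exact aux_tendsto_projC hAk hmono hnull u
      -- the main identity
      have main : ∀ u v : MeasureTheory.Lp H 2 μ,
          (inner ℂ (B (Ψ n u)) (Ψ n v) : ℂ) = inner ℂ (B u) v := by
        intro u v
        have hk : ∀ k : ℕ,
            (inner ℂ (B (Ψ n (projC (hFmeas k) u))) (Ψ n (projC (hFmeas k) v)) : ℂ)
              = inner ℂ (B (projC (hFmeas k) u)) (projC (hFmeas k) v) := by
          intro k
          rw [hsum k u, hsum k v, map_sum (Ψ n), map_sum B, map_sum (Ψ n), map_sum B]
          rw [sum_inner, sum_inner]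
          refine Finset.sum_congr rfl fun i _ => ?_
          rw [inner_sum, inner_sum]
          refine Finset.sum_congr rfl fun j _ => ?_
          by_cases hij : i = j
          · subst hij
            rw [key i u, key i v]
            exact diag (e i) _ _
          · rw [aux_inner_zero (hEdis hij) (hBsuppE i u) (suppΨ j v),
              aux_inner_zero (hCdis hij) (hBsuppC i u) (aux_coeFn_projC (hCmeas j) v)]
        have hcont1 : Continuous fun w : MeasureTheory.Lp H 2 μ => B (Ψ n w) :=
          B.continuous.comp (Ψ n).continuous
        have h1 : Filter.Tendsto
            (fun k => (inner ℂ (B (Ψ n (projC (hFmeas k) u))) (Ψ n (projC (hFmeas k) v)) : ℂ))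
            Filter.atTop (nhds (inner ℂ (B (Ψ n u)) (Ψ n v))) :=
          Filter.Tendsto.inner ((hcont1.tendsto u).comp (htend u))
            (((Ψ n).continuous.tendsto v).comp (htend v))
        have h2 : Filter.Tendsto
            (fun k => (inner ℂ (B (projC (hFmeas k) u)) (projC (hFmeas k) v) : ℂ))
            Filter.atTop (nhds (inner ℂ (B u) v)) :=
          Filter.Tendsto.inner ((B.continuous.tendsto u).comp (htend u)) (htend v)
        simp only [hk] at h1
        exact tendsto_nhds_unique h1 h2
      refine ContinuousLinearMap.ext fun u => ?_
      refine ext_inner_right ℂ fun v => ?_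
      rw [ContinuousLinearMap.mul_apply, ContinuousLinearMap.mul_apply,
        ContinuousLinearMap.star_eq_adjoint, ContinuousLinearMap.adjoint_inner_left]
      exact main u v
    · exact hB.2
end
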